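/- Let G', α, β be the graph and colorings constructed from a graph G on n vertices and an integer t ≥ 1, and let k = n + t + 1. If there exists a k-recoloring sequence for G' from α to β of length at most 2t + 2t², then G has an independent set of size at least t − 1. -/

import Mathlib

/-- A `k`-coloring of `G`: colors in `{1,…,k}`, adjacent vertices differently colored. -/
def IsKColoring {V : Type*} (G : SimpleGraph V) (k : ℕ) (γ : V → ℕ) : Prop :=
  (∀ v, γ v ∈ Finset.Icc 1 k) ∧ ∀ u v, G.Adj u v → γ u ≠ γ v

/-- A `k`-recoloring sequence `seq 0, …, seq ℓ` from `α` to `β`: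
all are `k`-colorings, and consecutive colorings differ on at most one vertex. -/
def IsRecolSeq {V : Type*} (G : SimpleGraph V) (k : ℕ) (seq : ℕ → V → ℕ)
    (ℓ : ℕ) (α β : V → ℕ) : Prop :=
  seq 0 = α ∧ seq ℓ = β ∧ (∀ i ≤ ℓ, IsKColoring G k (seq i)) ∧
  ∀ i < ℓ, ∀ u w, seq i u ≠ seq (i+1) u → seq i w ≠ seq (i+1) w → u = w

/-- The graph `B_k`: vertices `b^i_j` for `i,j ∈ {1,…,k}`, with `b^i_j ~ b^{i'}_{j'}`
iff `i ≠ i'` and `j ≠ j'` (the complement of `K_k □ K_k`). -/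
def Bgraph (k : ℕ) : SimpleGraph (Fin k × Fin k) where
  Adj p q := p.1 ≠ q.1 ∧ p.2 ≠ q.2
  symm := ⟨fun p q h => ⟨h.1.symm, h.2.symm⟩⟩
  loopless := ⟨fun p h => h.1 rfl⟩

/-- The coloring `α^k` of `B_k`: `α^k(b^i_j) = i`. -/
def alphak (k : ℕ) : Fin k × Fin k → ℕ := fun p => p.1.val + 1

/-- The coloring `β^k` of `B_k`: `β^k(b^i_j) = j`. -/
def betak (k : ℕ) : Fin k × Fin k → ℕ := fun p => p.2.val + 1

/-- Vertices of the graph `G'` of the W[1]-hardness construction: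
`g i` are the vertices `g_1,…,g_n` (copies of `v_1,…,v_n`), `b i j` are the vertices of
`V_B = {b^i_j : i,j ∈ {1,…,t}}`, and `c m s` is the `s`-th vertex of the color-guard set
`C_{m+1}` (each of the `n+t+1` sets `C_1,…,C_{n+t+1}` has `2t + 2t²` vertices). -/
inductive GV (n t : ℕ) : Type
  | g : Fin n → GV n t
  | b : Fin t → Fin t → GV n t
  | c : Fin (n + t + 1) → Fin (2 * t + 2 * t ^ 2) → GV n t
deriving DecidableEq

/-- The graph `G'` of the W[1]-hardness construction, built from `G`. -/
def Wgraph (n t : ℕ) (G : SimpleGraph (Fin n)) : SimpleGraph (GV n t) where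
  Adj w w' :=
    match w, w' with
    | .g p, .g q => G.Adj p q
    | .g _, .b _ _ => True
    | .b _ _, .g _ => True
    | .b i j, .b i' j' => i ≠ i' ∧ j ≠ j'
    | .g i, .c m _ => m.val ≠ i.val ∧ m.val ≠ n + t
    | .c m _, .g i => m.val ≠ i.val ∧ m.val ≠ n + t
    | .b _ _, .c m _ => m.val = n + t
    | .c m _, .b _ _ => m.val = n + t
    | .c _ _, .c _ _ => False
  symm := by
    constructor
    rintro (p | ⟨i, j⟩ | ⟨m, s⟩) (q | ⟨i', j'⟩ | ⟨m', s'⟩) h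
    · exact G.adj_symm h
    · trivial
    · exact h
    · trivial
    · exact ⟨fun e => h.1 e.symm, fun e => h.2 e.symm⟩
    · exact h
    · exact h
    · exact h
    · exact h
  loopless := by
    constructor
    rintro (p | ⟨i, j⟩ | ⟨m, s⟩) h
    · exact G.irrefl h
    · exact h.1 rfl
    · exact h

/-- The `(n+t+1)`-coloring `α` of `G'`: `α(g_i) = i`, `α(c) = i` for `c ∈ C_i`,
`α(b^i_j) = n + i`. -/
def Walpha (n t : ℕ) : GV n t → ℕ
  | .g i => i.val + 1
  | .b i _ => n + i.val + 1
  | .c m _ => m.val + 1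

/-- The `(n+t+1)`-coloring `β` of `G'`: agrees with `α` on `V_G ∪ V_C`, and
`β(b^i_j) = n + j`. -/
def Wbeta (n t : ℕ) : GV n t → ℕ
  | .g i => i.val + 1
  | .b _ j => n + j.val + 1
  | .c m _ => m.val + 1


/-!
Each set `C_m` has `2t + 2t²` vertices, and some step of the sequence is spent on `V_B`, so
every `C_m` keeps a vertex of color `m` throughout. Hence `V_B` never uses color `n + t + 1`,
and `g_p` only ever has color `p` or `n + t + 1`.

On `V_B`, the complement of the rook's graph, every color class lies in a row or in a column.
Call a row committed if some color occurs twice in it, and likewise a column. Committed lines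
need pairwise distinct colors, and an uncommitted row together with an uncommitted column
carries `2t - 1` distinct colors. So as long as `V_B` sees at most `2t - 2` colors, all rows
stay committed: a recoloring uncommits at most one row, and `t` committed columns plus `t - 1`
committed rows would already need `2t - 1` colors. As `α` commits every row and `β` none, some
intermediate coloring shows `2t - 1` colors on `V_B`, at least `t - 1` of them colors `c ≤ n`.
Each such `g_c` sees a vertex of color `c`, so it has color `n + t + 1`, and these vertices
form an independent set.
-/

open Finset

theorem exists_lt_ne_succ_of_ne {β : Type*} {a : ℕ → β} {i : ℕ} (h : a i ≠ a 0) :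
    ∃ j < i, a j ≠ a (j + 1) := by
  induction i with
  | zero => exact absurd rfl h
  | succ i ih =>
    by_cases hi : a i = a 0
    · exact ⟨i, i.lt_succ_self, fun e => h (e ▸ hi)⟩
    · obtain ⟨j, hj, hne⟩ := ih hi
      exact ⟨j, by omega, hne⟩

theorem IsRecolSeq.exists_mem_forall_eq {V : Type*} {G : SimpleGraph V} {k ℓ : ℕ}
    {seq : ℕ → V → ℕ} {α β : V → ℕ} (hseq : IsRecolSeq G k seq ℓ α β) (s : Finset V)
    (hs : ℓ < #s) : ∃ v ∈ s, ∀ i ≤ ℓ, seq i v = α v := by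
  by_contra! h
  have hchange : ∀ v ∈ s, ∃ j < ℓ, seq j v ≠ seq (j + 1) v := by
    intro v hv
    obtain ⟨i, hi, hne⟩ := h v hv
    obtain ⟨j, hj, hne⟩ := exists_lt_ne_succ_of_ne (a := fun i => seq i v) (i := i)
      (by rwa [hseq.1])
    exact ⟨j, by omega, hne⟩
  choose! F hF hFne using hchange
  have := card_le_card_of_injOn F (t := range ℓ) (fun v hv => mem_range.2 (hF v hv))
    fun v hv w hw e => hseq.2.2.2 _ (hF v hv) v w (hFne v hv) (e ▸ hFne w hw)
  rw [card_range] at this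
  omega

theorem card_le_card_filter_le_add {s : Finset ℕ} {n t : ℕ} (hs : ∀ c ∈ s, c ≤ n + t) :
    #s ≤ #(s.filter (· ≤ n)) + t := by
  have hhigh : s.filter (fun c => ¬ c ≤ n) ⊆ Ioc n (n + t) := fun c hc => by
    simp only [mem_filter] at hc
    exact mem_Ioc.2 ⟨by omega, hs c hc.1⟩
  have := card_le_card hhigh
  rw [Nat.card_Ioc] at this
  have := card_filter_add_card_filter_not (s := s) (· ≤ n)
  omega

section RookComplement

variable {t : ℕ} {α : Type*} {f g : Fin t × Fin t → α}

def IsRowColor (f : Fin t × Fin t → α) (i : Fin t) (x : α) : Prop :=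
  ∃ j j', j ≠ j' ∧ f (i, j) = x ∧ f (i, j') = x

def IsColColor (f : Fin t × Fin t → α) (j : Fin t) (x : α) : Prop :=
  ∃ i i', i ≠ i' ∧ f (i, j) = x ∧ f (i', j) = x

theorem IsRowColor.fst_eq (hf : ∀ p q, (Bgraph t).Adj p q → f p ≠ f q) {i : Fin t} {x : α}
    (h : IsRowColor f i x) {r : Fin t × Fin t} (hr : f r = x) : r.1 = i := by
  obtain ⟨j, j', hjj', hj, hj'⟩ := h
  by_contra hri
  have hrj : r.2 = j := by
    by_contra h
    exact hf r (i, j) ⟨hri, h⟩ (hr.trans hj.symm)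
  have hrj' : r.2 = j' := by
    by_contra h
    exact hf r (i, j') ⟨hri, h⟩ (hr.trans hj'.symm)
  exact hjj' (hrj.symm.trans hrj')

theorem IsColColor.snd_eq (hf : ∀ p q, (Bgraph t).Adj p q → f p ≠ f q) {j : Fin t} {x : α}
    (h : IsColColor f j x) {r : Fin t × Fin t} (hr : f r = x) : r.2 = j :=
  IsRowColor.fst_eq (f := f ∘ Prod.swap) (fun _ _ h => hf _ _ ⟨h.2, h.1⟩) h (r := r.swap) hr

theorem card_add_card_le_card_image [DecidableEq α]
    (hf : ∀ p q, (Bgraph t).Adj p q → f p ≠ f q) {R C : Finset (Fin t)}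
    (hR : ∀ i ∈ R, ∃ x, IsRowColor f i x) (hC : ∀ j ∈ C, ∃ x, IsColColor f j x) :
    #R + #C ≤ #(univ.image f) := by
  rw [← card_disjSum]
  refine card_le_card_of_forall_subsingleton (Sum.elim (IsRowColor f) (IsColColor f)) ?_ ?_
  · rintro (i | j) hl
    · obtain ⟨x, hx⟩ := hR i (by simpa using hl)
      refine ⟨x, ?_, hx⟩
      obtain ⟨j, -, -, hj, -⟩ := hx
      exact mem_image.2 ⟨_, mem_univ _, hj⟩
    · obtain ⟨x, hx⟩ := hC j (by simpa using hl)
      refine ⟨x, ?_, hx⟩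
      obtain ⟨i, -, -, hi, -⟩ := hx
      exact mem_image.2 ⟨_, mem_univ _, hi⟩
  · rintro x - (i₁ | j₁) ⟨-, h₁⟩ (i₂ | j₂) ⟨-, h₂⟩ <;>
      obtain ⟨a, b, hab, ha, hb⟩ := h₂
    · exact congrArg Sum.inl (h₁.fst_eq hf ha).symm
    · exact absurd ((h₁.fst_eq hf ha).trans (h₁.fst_eq hf hb).symm) hab
    · exact absurd ((h₁.snd_eq hf ha).trans (h₁.snd_eq hf hb).symm) hab
    · exact congrArg Sum.inr (h₁.snd_eq hf ha).symm

theorem two_mul_sub_one_le_card_image_of_not_isRowColor_of_not_isColColor [DecidableEq α]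
    (hf : ∀ p q, (Bgraph t).Adj p q → f p ≠ f q) {i j : Fin t}
    (hi : ∀ x, ¬ IsRowColor f i x) (hj : ∀ x, ¬ IsColColor f j x) :
    2 * t - 1 ≤ #(univ.image f) := by
  have hrow : Function.Injective fun j' => f (i, j') := fun a b hab => by
    by_contra h
    exact hi _ ⟨a, b, h, rfl, hab.symm⟩
  have hcol : Function.Injective fun i' => f (i', j) := fun a b hab => by
    by_contra h
    exact hj _ ⟨a, b, h, rfl, hab.symm⟩
  have hdisj : Disjoint (univ.image fun j' => f (i, j'))
      ((univ.erase i).image fun i' => f (i', j)) := by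
    simp only [disjoint_left, mem_image, mem_univ, true_and, mem_erase, and_true, not_exists]
    rintro _ ⟨j', rfl⟩ i' ⟨hi', he⟩
    by_cases hj' : j' = j
    · subst hj'
      exact hi' (hcol he)
    · exact hf (i', j) (i, j') ⟨hi', Ne.symm hj'⟩ he
  have hsub : (univ.image fun j' => f (i, j')) ∪ (univ.erase i).image (fun i' => f (i', j)) ⊆
      univ.image f := by
    intro x
    simp only [mem_union, mem_image, mem_univ, true_and, mem_erase]
    rintro (⟨j', rfl⟩ | ⟨i', -, rfl⟩) <;> exact ⟨_, rfl⟩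
  calc 2 * t - 1 = t + (t - 1) := by omega
    _ = #(univ.image fun j' => f (i, j')) + #((univ.erase i).image fun i' => f (i', j)) := by
      rw [card_image_of_injective _ hrow, card_image_of_injective _ hcol,
        card_erase_of_mem (mem_univ _), card_univ, Fintype.card_fin]
    _ ≤ #(univ.image f) := (card_union_of_disjoint hdisj).symm.trans_le (card_le_card hsub)

theorem two_mul_sub_one_le_card_image_of_isRowColor_of_isColColor [DecidableEq α]
    (hg : ∀ p q, (Bgraph t).Adj p q → g p ≠ g q) {v : Fin t × Fin t} (hfg : ∀ p ≠ v, g p = f p)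
    (hrows : ∀ i, ∃ x, IsRowColor f i x) (hcols : ∀ j, ∃ x, IsColColor g j x) :
    2 * t - 1 ≤ #(univ.image g) := by
  have hR : ∀ i ∈ univ.erase v.1, ∃ x, IsRowColor g i x := by
    intro i hi
    obtain ⟨x, j, j', hjj', hj, hj'⟩ := hrows i
    have hv : ∀ k, ((i, k) : Fin t × Fin t) ≠ v := fun k h =>
      (mem_erase.1 hi).1 (congrArg Prod.fst h)
    exact ⟨x, j, j', hjj', (hfg _ (hv j)).trans hj, (hfg _ (hv j')).trans hj'⟩
  have := card_add_card_le_card_image hg hR (C := univ) (fun j _ => hcols j)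
  rw [card_erase_of_mem (mem_univ _), card_univ, Fintype.card_fin] at this
  omega

theorem exists_two_mul_sub_one_le_card_image [DecidableEq α] {L : ℕ}
    {γ : ℕ → Fin t × Fin t → α} (hproper : ∀ k ≤ L, ∀ p q, (Bgraph t).Adj p q → γ k p ≠ γ k q)
    (hstep : ∀ k < L, ∀ p q, γ k p ≠ γ (k + 1) p → γ k q ≠ γ (k + 1) q → p = q)
    (h0 : ∀ i, ∃ x, IsRowColor (γ 0) i x) (hL : ∃ i, ∀ x, ¬ IsRowColor (γ L) i x) :
    ∃ k ≤ L, 2 * t - 1 ≤ #(univ.image (γ k)) := by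
  by_contra! hsmall
  suffices ∀ k ≤ L, ∀ i, ∃ x, IsRowColor (γ k) i x by
    obtain ⟨i, hi⟩ := hL
    obtain ⟨x, hx⟩ := this L le_rfl i
    exact hi x hx
  intro k
  induction k with
  | zero => exact fun _ => h0
  | succ k ih =>
    intro hk
    by_contra! ⟨i, hi⟩
    refine (hsmall (k + 1) hk).not_ge ?_
    by_cases hcols : ∀ j, ∃ x, IsColColor (γ (k + 1)) j x
    · obtain ⟨v, hv⟩ : ∃ v, ∀ p ≠ v, γ (k + 1) p = γ k p := by
        by_cases h : ∀ v, γ k v = γ (k + 1) v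
        · exact ⟨(i, i), fun p _ => (h p).symm⟩
        · obtain ⟨v, hv⟩ := not_forall.1 h
          exact ⟨v, fun p hp => by_contra fun h' => hp (hstep k hk p v (Ne.symm h') hv)⟩
      exact two_mul_sub_one_le_card_image_of_isRowColor_of_isColColor (hproper _ hk) hv
        (ih (by omega)) hcols
    · obtain ⟨j, hj⟩ := not_forall.1 hcols
      exact two_mul_sub_one_le_card_image_of_not_isRowColor_of_not_isColColor (hproper _ hk) hi
        (not_exists.1 hj)

end RookComplement

section Construction

variable {n t : ℕ} {G : SimpleGraph (Fin n)}

def restrictB (γ : GV n t → ℕ) : Fin t × Fin t → ℕ := fun p => γ (.b p.1 p.2)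

theorem isRowColor_restrictB_walpha (ht : 2 ≤ t) (i : Fin t) :
    ∃ x, IsRowColor (restrictB (Walpha n t)) i x :=
  ⟨n + i + 1, ⟨0, by omega⟩, ⟨1, by omega⟩, by simp, rfl, rfl⟩

theorem not_isRowColor_restrictB_wbeta (i : Fin t) (x : ℕ) :
    ¬ IsRowColor (restrictB (Wbeta n t)) i x := by
  rintro ⟨j, j', hjj', hj, hj'⟩
  simp only [restrictB, Wbeta] at hj hj'
  omega

theorem exists_forall_seq_c_eq {ℓ : ℕ} {seq : ℕ → GV n t → ℕ} (ht : 2 ≤ t)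
    (hℓ : ℓ ≤ 2 * t + 2 * t ^ 2)
    (hseq : IsRecolSeq (Wgraph n t G) (n + t + 1) seq ℓ (Walpha n t) (Wbeta n t))
    (m : Fin (n + t + 1)) : ∃ s, ∀ i ≤ ℓ, seq i (.c m s) = m + 1 := by
  set b : GV n t := .b ⟨0, by omega⟩ ⟨1, by omega⟩
  have hb : b ∉ univ.image (GV.c m) := by simp [b]
  have hcard : ℓ < #(insert b (univ.image (GV.c m))) := by
    rw [card_insert_of_notMem hb, card_image_of_injective _ fun _ _ h => (GV.c.inj h).2,
      card_univ, Fintype.card_fin]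
    omega
  obtain ⟨v, hv, hfix⟩ := hseq.exists_mem_forall_eq _ hcard
  rcases mem_insert.1 hv with rfl | hv
  · have := hfix ℓ le_rfl
    rw [hseq.2.1] at this
    simp [b, Wbeta, Walpha] at this
  · obtain ⟨s, -, rfl⟩ := mem_image.1 hv
    exact ⟨s, hfix⟩

variable {γ : GV n t → ℕ}

theorem apply_g_eq_or_eq (hγ : IsKColoring (Wgraph n t G) (n + t + 1) γ)
    (hguard : ∀ m : Fin (n + t + 1), ∃ s, γ (.c m s) = m + 1) (p : Fin n) :
    γ (.g p) = p + 1 ∨ γ (.g p) = n + t + 1 := by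
  have hr := mem_Icc.1 (hγ.1 (.g p))
  by_contra! h
  obtain ⟨s, hs⟩ := hguard ⟨γ (.g p) - 1, by omega⟩
  have hadj : (Wgraph n t G).Adj (.g p) (.c ⟨γ (.g p) - 1, by omega⟩ s) :=
    show _ ∧ _ by simp only [ne_eq]; omega
  exact hγ.2 _ _ hadj (by rw [hs]; simp only; omega)

theorem restrictB_le (hγ : IsKColoring (Wgraph n t G) (n + t + 1) γ)
    (hguard : ∀ m : Fin (n + t + 1), ∃ s, γ (.c m s) = m + 1) (p : Fin t × Fin t) :
    restrictB γ p ≤ n + t := by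
  obtain ⟨s, hs⟩ := hguard (Fin.last (n + t))
  have hne := hγ.2 (.b p.1 p.2) (.c (Fin.last _) s) rfl
  have := mem_Icc.1 (hγ.1 (.b p.1 p.2))
  rw [hs, Fin.val_last] at hne
  exact Nat.le_of_lt_succ (lt_of_le_of_ne this.2 hne)

theorem exists_indep_card_ge (hγ : IsKColoring (Wgraph n t G) (n + t + 1) γ)
    (hguard : ∀ m : Fin (n + t + 1), ∃ s, γ (.c m s) = m + 1) :
    ∃ S : Finset (Fin n), #((univ.image (restrictB γ)).filter (· ≤ n)) ≤ #S ∧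
      ∀ u ∈ S, ∀ v ∈ S, ¬ G.Adj u v := by
  refine ⟨univ.filter fun p => γ (.g p) = n + t + 1, ?_, ?_⟩
  · refine (card_le_card ?_).trans (card_image_le (f := fun p : Fin n => p.val + 1))
    intro c hc
    simp only [mem_filter, mem_image, mem_univ, true_and, Prod.exists, restrictB] at hc
    obtain ⟨⟨i, j, rfl⟩, hcn⟩ := hc
    have hc1 := (mem_Icc.1 (hγ.1 (.b i j))).1
    set p : Fin n := ⟨γ (.b i j) - 1, by omega⟩
    have hne : γ (.g p) ≠ γ (.b i j) := hγ.2 _ _ trivial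
    refine mem_image.2 ⟨p, mem_filter.2 ⟨mem_univ _, ?_⟩, by simp only [p]; omega⟩
    refine (apply_g_eq_or_eq hγ hguard p).resolve_left fun h => hne ?_
    rw [h]
    simp only [p]
    omega
  · intro u hu v hv huv
    exact hγ.2 (.g u) (.g v) huv (by rw [(mem_filter.1 hu).2, (mem_filter.1 hv).2])

end Construction

theorem stmt_8_general (n t : ℕ) (G : SimpleGraph (Fin n))
    (ℓ : ℕ) (hℓ : ℓ ≤ 2 * t + 2 * t ^ 2) (seq : ℕ → GV n t → ℕ)
    (hseq : IsRecolSeq (Wgraph n t G) (n + t + 1) seq ℓ (Walpha n t) (Wbeta n t)) :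
    ∃ S : Finset (Fin n), t - 1 ≤ S.card ∧ ∀ u ∈ S, ∀ v ∈ S, ¬ G.Adj u v := by
  obtain ⟨h0, hL, hcol, hstep⟩ := id hseq
  rcases lt_or_ge t 2 with ht | ht
  · exact ⟨∅, by simp only [card_empty]; omega, by simp⟩
  have hguard : ∀ i ≤ ℓ, ∀ m : Fin (n + t + 1), ∃ s, seq i (.c m s) = m + 1 := fun i hi m =>
    (exists_forall_seq_c_eq ht hℓ hseq m).imp fun _ hs => hs i hi
  obtain ⟨τ, hτ, hcard⟩ := exists_two_mul_sub_one_le_card_image (γ := fun i => restrictB (seq i))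
    (fun i hi _ _ hpq => (hcol i hi).2 _ _ hpq)
    (fun i hi p q hp hq => by simpa [Prod.ext_iff] using hstep i hi _ _ hp hq)
    (by rw [h0]; exact isRowColor_restrictB_walpha ht)
    ⟨⟨0, by omega⟩, by rw [hL]; exact not_isRowColor_restrictB_wbeta _⟩
  obtain ⟨S, hS, hindep⟩ := exists_indep_card_ge (hcol τ hτ) (hguard τ hτ)
  have := card_le_card_filter_le_add (s := univ.image (restrictB (seq τ)))
    (forall_mem_image.2 fun p _ => restrictB_le (hcol τ hτ) (hguard τ hτ) p)
  exact ⟨S, by omega, hindep⟩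

/-- If there is an `(n+t+1)`-recoloring sequence for `G'` from `α` to `β` of
length at most `2t + 2t²`, then `G` has an independent set of size at least `t - 1`. -/
theorem stmt_8 (n t : ℕ) (ht : 1 ≤ t) (G : SimpleGraph (Fin n))
    (ℓ : ℕ) (hℓ : ℓ ≤ 2 * t + 2 * t ^ 2) (seq : ℕ → GV n t → ℕ)
    (hseq : IsRecolSeq (Wgraph n t G) (n + t + 1) seq ℓ (Walpha n t) (Wbeta n t)) :
    ∃ S : Finset (Fin n), t - 1 ≤ S.card ∧ ∀ u ∈ S, ∀ v ∈ S, ¬ G.Adj u v :=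
  stmt_8_general n t G ℓ hℓ seq hseq
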